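/- arXiv:2401.10992 — 2 statements merged into one kernel-verified Lean document; each statement's English description precedes it below -/
import Mathlib

section
/- Let p ∈ (0,∞), let x_3 < x_1 and y_1 < y_2 be reals, and for u ∈ ℝ set Δ(u) := conv{(x_1,y_1),(u,y_2),(x_3,y_1)} ⊂ ℝ². For all weights r, τ, σ > 0 with 2/r = 1/τ + 1/σ, and all x_2, x_2', x, y, y' ∈ ℝ: h_{p,Δ((x_2+x_2')/2)}( r·(x, (y+y')/2) ) ≤ (σ/(τ+σ))·h_{p,Δ(x_2)}( τ·(x,y) ) + (τ/(τ+σ))·h_{p,Δ(x_2')}( σ·(x,y') ). -/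
open MeasureTheory Set

/-- The `L^p`-support function of a body `K ⊆ ℝ²`. -/
noncomputable def suppFn (p : ℝ) (K : Set (ℝ × ℝ)) (y : ℝ × ℝ) : ℝ :=
  (1 / p) * Real.log ((∫ x in K, Real.exp (p * (x.1 * y.1 + x.2 * y.2))) / (volume K).toReal)

/-- The `L^p`-Mahler volume of `K ⊆ ℝ²`. -/
noncomputable def mahlerVol (p : ℝ) (K : Set (ℝ × ℝ)) : ℝ :=
  (volume K).toReal * ∫ y, Real.exp (-(suppFn p K y))

/-- The near norm of the `L^p`-polar body, for `n = 2`. -/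
noncomputable def nearNorm (p : ℝ) (K : Set (ℝ × ℝ)) (y : ℝ × ℝ) : ℝ :=
  if y = 0 then 0
  else (∫ r in Set.Ioi (0 : ℝ), r * Real.exp (-(suppFn p K (r • y)))) ^ (-(1 / 2 : ℝ))

/-- The `L^p`-polar body of `K ⊆ ℝ²`. -/
noncomputable def lpPolar (p : ℝ) (K : Set (ℝ × ℝ)) : Set (ℝ × ℝ) :=
  {y | nearNorm p K y ≤ 1}

/-! Every `Δ u` is the image of `Δ 0` under the area-preserving shear
`(a, b) ↦ (a + u (b - y₁) / (y₂ - y₁), b)`, which fixes the base of the triangle; hence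
`h_{p,Δ u}(a, b) = h_{p,Δ 0}(a, b + u a / (y₂ - y₁)) - u y₁ a / (y₂ - y₁)`. With
`λ = σ / (τ + σ)` and `μ = τ / (τ + σ)` we have `λ τ = μ σ = r / 2`, so the point at which
`h_{p,Δ 0}` is evaluated on the left is the `(λ, μ)`-combination of the two points on the
right, and the correction terms combine in the same way. The claim is therefore the convexity of
`h_{p,Δ 0}`, which is Hölder's inequality for `w ↦ ∫_{Δ 0} e^{p ⟨z, w⟩} dz`. -/

open Real

lemma integral_exp_mul_add_mul_le {α : Type*} [MeasurableSpace α] {μ : Measure α}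
    {f g : α → ℝ} (hf : AEMeasurable f μ) (hg : AEMeasurable g μ)
    (hfi : Integrable (fun z ↦ exp (f z)) μ) (hgi : Integrable (fun z ↦ exp (g z)) μ)
    {a b : ℝ} (ha : 0 < a) (hb : 0 < b) (hab : a + b = 1) :
    ∫ z, exp (a * f z + b * g z) ∂μ ≤ (∫ z, exp (f z) ∂μ) ^ a * (∫ z, exp (g z) ∂μ) ^ b := by
  have hpow : ∀ {c : ℝ}, 0 < c → ∀ s, exp (c * s) ^ (1 / c) = exp s := fun hc s ↦ by
    rw [← exp_mul]; field_simp
  have hmemLp : ∀ {c : ℝ} {k : α → ℝ}, 0 < c → AEMeasurable k μ →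
      Integrable (fun z ↦ exp (k z)) μ →
      MemLp (fun z ↦ exp (c * k z)) (ENNReal.ofReal (1 / c)) μ := by
    intro c k hc hk hki
    have hc' : ENNReal.ofReal (1 / c) ≠ 0 := by simpa using hc
    rw [← integrable_norm_rpow_iff (hk.const_mul c).exp.aestronglyMeasurable hc'
      ENNReal.ofReal_ne_top, ENNReal.toReal_ofReal (by positivity)]
    simpa only [norm_of_nonneg (exp_pos _).le, hpow hc] using hki
  have := integral_mul_le_Lp_mul_Lq_of_nonneg (holderConjugate_one_div ha hb hab)
    (ae_of_all _ fun z ↦ (exp_pos (a * f z)).le) (ae_of_all _ fun z ↦ (exp_pos (b * g z)).le)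
    (hmemLp ha hf hfi) (hmemLp hb hg hgi)
  simpa only [← exp_add, hpow ha, hpow hb, one_div_one_div] using this

noncomputable def expMoment (p : ℝ) (K : Set (ℝ × ℝ)) (w : ℝ × ℝ) : ℝ :=
  ∫ z in K, exp (p * (z.1 * w.1 + z.2 * w.2))

lemma suppFn_of_volume_eq_zero (p : ℝ) {K : Set (ℝ × ℝ)} (hK : volume K = 0) (w : ℝ × ℝ) :
    suppFn p K w = 0 := by
  simp [suppFn, hK]

lemma integrableOn_exp_inner (p : ℝ) {K : Set (ℝ × ℝ)} (hK : IsCompact K) (w : ℝ × ℝ) :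
    IntegrableOn (fun z : ℝ × ℝ ↦ exp (p * (z.1 * w.1 + z.2 * w.2))) K :=
  (by fun_prop : Continuous _).continuousOn.integrableOn_compact hK

lemma expMoment_pos (p : ℝ) {K : Set (ℝ × ℝ)} (hK : IsCompact K) (hK0 : volume K ≠ 0)
    (w : ℝ × ℝ) : 0 < expMoment p K w :=
  have : NeZero (volume.restrict K) := ⟨by simpa using hK0⟩
  integral_exp_pos (integrableOn_exp_inner p hK w)

lemma suppFn_eq_sub (p : ℝ) {K : Set (ℝ × ℝ)} (hK : IsCompact K) (hK0 : volume K ≠ 0)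
    (w : ℝ × ℝ) :
    suppFn p K w = p⁻¹ * (log (expMoment p K w) - log (volume K).toReal) := by
  rw [suppFn, ← expMoment, log_div (expMoment_pos p hK hK0 w).ne'
    (ENNReal.toReal_pos hK0 hK.measure_lt_top.ne).ne', one_div]

lemma convexOn_log_expMoment (p : ℝ) {K : Set (ℝ × ℝ)} (hK : IsCompact K)
    (hK0 : volume K ≠ 0) : ConvexOn ℝ univ (fun w ↦ log (expMoment p K w)) := by
  refine convexOn_iff_forall_pos.mpr ⟨convex_univ, fun v _ w _ a b ha hb hab ↦ ?_⟩
  have hv := expMoment_pos p hK hK0 v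
  have hw := expMoment_pos p hK hK0 w
  have hHolder := integral_exp_mul_add_mul_le (μ := volume.restrict K)
    (f := fun z ↦ p * (z.1 * v.1 + z.2 * v.2)) (g := fun z ↦ p * (z.1 * w.1 + z.2 * w.2))
    (by fun_prop) (by fun_prop) (integrableOn_exp_inner p hK v) (integrableOn_exp_inner p hK w)
    ha hb hab
  have hlin : expMoment p K (a • v + b • w) =
      ∫ z in K, exp (a * (p * (z.1 * v.1 + z.2 * v.2)) + b * (p * (z.1 * w.1 + z.2 * w.2))) :=
        by
    refine integral_congr_ae (ae_of_all _ fun z ↦ ?_)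
    simp only [Prod.fst_add, Prod.snd_add, Prod.smul_fst, Prod.smul_snd, smul_eq_mul]
    ring_nf
  calc log (expMoment p K (a • v + b • w))
      ≤ log (expMoment p K v ^ a * expMoment p K w ^ b) :=
        log_le_log (expMoment_pos p hK hK0 _) (hlin ▸ hHolder)
    _ = a • log (expMoment p K v) + b • log (expMoment p K w) := by
        rw [log_mul (rpow_pos_of_pos hv a).ne' (rpow_pos_of_pos hw b).ne', log_rpow hv,
          log_rpow hw, smul_eq_mul, smul_eq_mul]

lemma convexOn_suppFn {p : ℝ} (hp : 0 < p) {K : Set (ℝ × ℝ)} (hK : IsCompact K) :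
    ConvexOn ℝ univ (suppFn p K) := by
  obtain hK0 | hK0 := eq_or_ne (volume K) 0
  · rw [funext (suppFn_of_volume_eq_zero p hK0)]
    exact convexOn_const 0 convex_univ
  rw [funext (suppFn_eq_sub p hK hK0)]
  exact ((convexOn_log_expMoment p hK hK0).sub (concaveOn_const _ convex_univ)).smul
    (inv_nonneg.mpr hp.le)

def shear (c t : ℝ) : (ℝ × ℝ) ≃ᵐ (ℝ × ℝ) where
  toFun z := (z.1 + c * z.2 + t, z.2)
  invFun z := (z.1 - c * z.2 - t, z.2)
  left_inv z := Prod.ext (by dsimp only; ring) rfl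
  right_inv z := Prod.ext (by dsimp only; ring) rfl
  measurable_toFun := (by fun_prop : Measurable fun z : ℝ × ℝ ↦ (z.1 + c * z.2 + t, z.2))
  measurable_invFun := (by fun_prop : Measurable fun z : ℝ × ℝ ↦ (z.1 - c * z.2 - t, z.2))

lemma shear_apply (c t : ℝ) (z : ℝ × ℝ) : shear c t z = (z.1 + c * z.2 + t, z.2) := rfl

lemma measurePreserving_shear (c t : ℝ) : MeasurePreserving (shear c t) volume volume := by
  have hskew : MeasurePreserving (fun z : ℝ × ℝ ↦ (z.1, z.2 + (c * z.1 + t)))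
      (volume.prod volume) (volume.prod volume) :=
    (MeasurePreserving.id volume).skew_product (by fun_prop)
      (ae_of_all _ fun b ↦ (measurePreserving_add_right volume (c * b + t)).map_eq)
  have hshear :
      ⇑(shear c t) = (Prod.swap ∘ fun z : ℝ × ℝ ↦ (z.1, z.2 + (c * z.1 + t))) ∘ Prod.swap := by
    ext z <;> simp [shear_apply]
    ring
  rw [hshear, Measure.volume_eq_prod]
  exact (Measure.measurePreserving_swap.comp hskew).comp Measure.measurePreserving_swap

lemma image_shear_convexHull (c t : ℝ) (s : Set (ℝ × ℝ)) :
    shear c t '' convexHull ℝ s = convexHull ℝ (shear c t '' s) :=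
  AffineMap.image_convexHull
    { toFun := shear c t
      linear := (LinearMap.fst ℝ ℝ ℝ + c • LinearMap.snd ℝ ℝ ℝ).prod (LinearMap.snd ℝ ℝ ℝ)
      map_vadd' := fun z v ↦ Prod.ext (by simp [shear_apply]; ring) (by simp [shear_apply]) }
    s

lemma volume_image_shear (c t : ℝ) (K : Set (ℝ × ℝ)) : volume (shear c t '' K) = volume K := by
  rw [MeasurableEquiv.image_eq_preimage_symm]
  exact (measurePreserving_shear c t).symm.measure_preimage_equiv K

lemma expMoment_image_shear (p c t : ℝ) (K : Set (ℝ × ℝ)) (a b : ℝ) :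
    expMoment p (shear c t '' K) (a, b) = exp (p * t * a) * expMoment p K (a, b + c * a) := by
  rw [expMoment, (measurePreserving_shear c t).setIntegral_image_emb
    (shear c t).measurableEmbedding, expMoment, ← integral_const_mul]
  refine integral_congr_ae (ae_of_all _ fun z ↦ ?_)
  simp only [shear_apply, ← exp_add]
  ring_nf

lemma suppFn_image_shear {p : ℝ} (hp : p ≠ 0) {K : Set (ℝ × ℝ)} (hK : IsCompact K)
    (hK0 : volume K ≠ 0) (c t a b : ℝ) :
    suppFn p (shear c t '' K) (a, b) = suppFn p K (a, b + c * a) + t * a := by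
  have hV : 0 < (volume K).toReal := ENNReal.toReal_pos hK0 hK.measure_lt_top.ne
  rw [suppFn, ← expMoment, expMoment_image_shear, volume_image_shear, mul_div_assoc,
    log_mul (exp_pos _).ne' (div_pos (expMoment_pos p hK hK0 _) hV).ne', log_exp, suppFn,
    ← expMoment]
  field_simp
  ring


lemma triangle_eq_image_shear {x1 x3 y1 y2 : ℝ} (hy : y1 ≠ y2) (u : ℝ) :
    convexHull ℝ ({(x1, y1), (u, y2), (x3, y1)} : Set (ℝ × ℝ)) =
      shear (u / (y2 - y1)) (-(u / (y2 - y1) * y1)) ''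
        convexHull ℝ {(x1, y1), (0, y2), (x3, y1)} := by
  have hbase : ∀ x, shear (u / (y2 - y1)) (-(u / (y2 - y1) * y1)) (x, y1) = (x, y1) := fun x ↦
    Prod.ext (by simp [shear_apply]) rfl
  have hapex : shear (u / (y2 - y1)) (-(u / (y2 - y1) * y1)) (0, y2) = (u, y2) :=
    Prod.ext (by simp [shear_apply]; field_simp [sub_ne_zero.mpr hy.symm]; ring) rfl
  rw [image_shear_convexHull, image_insert_eq, image_insert_eq, image_singleton, hbase, hbase,
    hapex]

lemma weights_mul_eq_half {r τ σ : ℝ} (hr : r ≠ 0) (hτ : 0 < τ) (hσ : 0 < σ)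
    (hw : 2 / r = 1 / τ + 1 / σ) : σ / (τ + σ) * τ = r / 2 ∧ τ / (τ + σ) * σ = r / 2 := by
  field_simp at hw ⊢
  constructor <;> linarith

lemma sheared_point_eq_comb {l m r τ σ : ℝ} (hl : l * τ = r / 2) (hm : m * σ = r / 2)
    (h x2 x2' x y y' : ℝ) :
    (r * x, r * ((y + y') / 2) + (x2 + x2') / 2 / h * (r * x)) =
      l • (τ * x, τ * y + x2 / h * (τ * x)) + m • (σ * x, σ * y' + x2' / h * (σ * x)) := by
  ext <;> simp only [Prod.fst_add, Prod.snd_add, Prod.smul_mk, smul_eq_mul]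
  · linear_combination -x * hl - x * hm
  · linear_combination -(y + x2 / h * x) * hl - (y' + x2' / h * x) * hm

theorem triangle_suppFn_sliding_convexity_general (p : ℝ) (hp : 0 < p)
    (x1 x3 y1 y2 : ℝ) (hy : y1 < y2)
    (Δ : ℝ → Set (ℝ × ℝ))
    (hΔ : ∀ u, Δ u = convexHull ℝ ({(x1, y1), (u, y2), (x3, y1)} : Set (ℝ × ℝ)))
    (r τ σ : ℝ) (hr : 0 < r) (hτ : 0 < τ) (hσ : 0 < σ)
    (hw : 2 / r = 1 / τ + 1 / σ)
    (x2 x2' x y y' : ℝ) :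
    suppFn p (Δ ((x2 + x2') / 2)) (r • ((x : ℝ), (y + y') / 2)) ≤
      (σ / (τ + σ)) * suppFn p (Δ x2) (τ • ((x : ℝ), y)) +
      (τ / (τ + σ)) * suppFn p (Δ x2') (σ • ((x : ℝ), y')) := by
  set h := y2 - y1
  have hΔ_shear : ∀ u, Δ u = shear (u / h) (-(u / h * y1)) '' Δ 0 := fun u ↦ by
    rw [hΔ, hΔ, triangle_eq_image_shear hy.ne]
  have hT : IsCompact (Δ 0) := hΔ 0 ▸ (toFinite _).isCompact_convexHull ℝ
  obtain hT0 | hT0 := eq_or_ne (volume (Δ 0)) 0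
  · -- a degenerate triangle (`x1 = x3`) has the junk support function `0`
    have hzero : ∀ u w, suppFn p (Δ u) w = 0 := fun u ↦
      suppFn_of_volume_eq_zero p (by rw [hΔ_shear, volume_image_shear, hT0])
    simp [hzero]
  have hsupp : ∀ u a b,
      suppFn p (Δ u) (a, b) = suppFn p (Δ 0) (a, b + u / h * a) - u / h * y1 * a := by
    intro u a b
    rw [hΔ_shear, suppFn_image_shear hp.ne' hT hT0]
    ring
  obtain ⟨hl, hm⟩ := weights_mul_eq_half hr.ne' hτ hσ hw
  have hconv := (convexOn_suppFn hp hT).2 (mem_univ (τ * x, τ * y + x2 / h * (τ * x)))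
    (mem_univ (σ * x, σ * y' + x2' / h * (σ * x))) (by positivity : 0 ≤ σ / (τ + σ))
    (by positivity : 0 ≤ τ / (τ + σ)) (by field_simp; ring)
  rw [← sheared_point_eq_comb hl hm] at hconv
  simp only [Prod.smul_mk, smul_eq_mul] at hconv ⊢
  rw [hsupp ((x2 + x2') / 2), hsupp x2, hsupp x2']
  linear_combination hconv + (x2 / h * y1 * x) * hl + (x2' / h * y1 * x) * hm

/-- Claim 4.5: the joint `convexity' inequality for the `L^p`-support
functions of the family of sliding triangles `Δ(u) = conv{(x₁,y₁),(u,y₂),(x₃,y₁)}`. -/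
theorem triangle_suppFn_sliding_convexity (p : ℝ) (hp : 0 < p)
    (x1 x3 y1 y2 : ℝ) (hx : x3 < x1) (hy : y1 < y2)
    (Δ : ℝ → Set (ℝ × ℝ))
    (hΔ : ∀ u, Δ u = convexHull ℝ ({(x1, y1), (u, y2), (x3, y1)} : Set (ℝ × ℝ)))
    (r τ σ : ℝ) (hr : 0 < r) (hτ : 0 < τ) (hσ : 0 < σ)
    (hw : 2 / r = 1 / τ + 1 / σ)
    (x2 x2' x y y' : ℝ) :
    suppFn p (Δ ((x2 + x2') / 2)) (r • ((x : ℝ), (y + y') / 2)) ≤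
      (σ / (τ + σ)) * suppFn p (Δ x2) (τ • ((x : ℝ), y)) +
      (τ / (τ + σ)) * suppFn p (Δ x2') (σ • ((x : ℝ), y')) :=
  triangle_suppFn_sliding_convexity_general p hp x1 x3 y1 y2 hy Δ hΔ r τ σ hr hτ hσ hw x2 x2' x y y'
end

section
/- Let p ∈ (0,∞) and let K ⊂ ℝ² be a convex body with 0 ∈ int K. Set α := min{x ∈ ℝ : (x,y) ∈ K for some y} and β := max{x ∈ ℝ : (x,y) ∈ K for some y}. Then |(K−(α,0))^{∘,p} ∩ {(x,y): x > 0}| < ∞ and |(K−(β,0))^{∘,p} ∩ {(x,y): x < 0}| < ∞, while |(K−(α,0))^{∘,p} ∩ {(x,y): x < 0}| = ∞ and |(K−(β,0))^{∘,p} ∩ {(x,y): x > 0}| = ∞. -/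
open MeasureTheory Set

/-!
If `ball z ε ⊆ K` and `⟨z, y⟩ ≥ 0`, then a ball of radius `ε / 4` inside `K` sees `y` with
`⟨x, y⟩ ≥ (ε / 4) ‖y‖₁`, so `h_{p,K}(r y) ≥ c + (ε / 4) ‖y‖₁ r` for a constant `c` depending only on
`p`, `K` and `ε`. The radial integral defining `‖y‖_{K^{∘,p}}^{-2}` is then at most
`e^{-c} / ((ε / 4) ‖y‖₁)²`, which is `< 1` for large `y`: the `L^p`-polar meets the half-plane
`⟨z, y⟩ ≥ 0` in a bounded set. For `K - (α, 0)` take `z = (-α, 0)`, which pairs nonnegatively with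
every `y` with `y₁ > 0`.

Conversely, if `K ⊆ {x₁ ≥ 0}` and `|x₂| ≤ R` on `K`, every `y` with `y₁ < 0` and `|y₂| < 1 / R`
satisfies `⟨x, y⟩ ≤ 1` on `K`, so `h_{p,K}(r y) ≤ r` and `y` lies in the `L^p`-polar; this strip has
infinite area.
-/

open Metric

lemma integrableOn_exp_pairing (p : ℝ) {K : Set (ℝ × ℝ)} (hK : IsCompact K) (w : ℝ × ℝ) :
    IntegrableOn (fun x : ℝ × ℝ => Real.exp (p * (x.1 * w.1 + x.2 * w.2))) K :=
  ContinuousOn.integrableOn_compact hK (by fun_prop)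

lemma measurable_suppFn (p : ℝ) (K : Set (ℝ × ℝ)) : Measurable (suppFn p K) := by
  have hint : StronglyMeasurable fun w : ℝ × ℝ =>
      ∫ x in K, Real.exp (p * (x.1 * w.1 + x.2 * w.2)) :=
    StronglyMeasurable.integral_prod_right' (f := fun q : (ℝ × ℝ) × (ℝ × ℝ) =>
      Real.exp (p * (q.2.1 * q.1.1 + q.2.2 * q.1.2))) (by fun_prop)
  exact measurable_const.mul ((hint.measurable.div_const _).log)

section SupportFunction

variable {p : ℝ} {K : Set (ℝ × ℝ)}

lemma suppFn_le_iff (hp : 0 < p) (hK : IsCompact K) (hvol : 0 < volume K) (w : ℝ × ℝ)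
    (b : ℝ) : suppFn p K w ≤ b ↔
      ∫ x in K, Real.exp (p * (x.1 * w.1 + x.2 * w.2)) ≤ Real.exp (p * b) * volume.real K := by
  have hV : 0 < volume.real K := ENNReal.toReal_pos hvol.ne' hK.measure_lt_top.ne
  have : NeZero (volume.restrict K) := ⟨by simpa using hvol.ne'⟩
  have hI := integral_exp_pos (integrableOn_exp_pairing p hK w)
  rw [suppFn, ← measureReal_def, one_div, inv_mul_le_iff₀ hp,
    Real.log_le_iff_le_exp (div_pos hI hV), div_le_iff₀ hV]

lemma suppFn_le_of_forall_le (hp : 0 < p) (hK : IsCompact K) (hvol : 0 < volume K)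
    {w : ℝ × ℝ} {b : ℝ} (hb : ∀ x ∈ K, x.1 * w.1 + x.2 * w.2 ≤ b) :
    suppFn p K w ≤ b := by
  rw [suppFn_le_iff hp hK hvol]
  refine (Real.le_norm_self _).trans <|
    norm_setIntegral_le_of_norm_le_const hK.measure_lt_top fun x hx => ?_
  rw [Real.norm_eq_abs, Real.abs_exp]
  exact Real.exp_le_exp.2 (mul_le_mul_of_nonneg_left (hb x hx) hp.le)

lemma le_suppFn_iff (hp : 0 < p) (hK : IsCompact K) (hvol : 0 < volume K) (w : ℝ × ℝ)
    (b : ℝ) : b ≤ suppFn p K w ↔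
      Real.exp (p * b) * volume.real K ≤ ∫ x in K, Real.exp (p * (x.1 * w.1 + x.2 * w.2)) := by
  have hV : 0 < volume.real K := ENNReal.toReal_pos hvol.ne' hK.measure_lt_top.ne
  have : NeZero (volume.restrict K) := ⟨by simpa using hvol.ne'⟩
  have hI := integral_exp_pos (integrableOn_exp_pairing p hK w)
  rw [suppFn, ← measureReal_def, one_div, le_inv_mul_iff₀ hp,
    Real.le_log_iff_exp_le (div_pos hI hV), le_div_iff₀ hV]

lemma le_suppFn_of_le_on (hp : 0 < p) (hK : IsCompact K) {Q : Set (ℝ × ℝ)} (hQK : Q ⊆ K)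
    (hQ : MeasurableSet Q) (hvolQ : 0 < volume Q) {w : ℝ × ℝ} {b : ℝ}
    (hb : ∀ x ∈ Q, b ≤ x.1 * w.1 + x.2 * w.2) :
    Real.log (volume.real Q / volume.real K) / p + b ≤ suppFn p K w := by
  have hvolK : 0 < volume K := hvolQ.trans_le (measure_mono hQK)
  have hVQ : 0 < volume.real Q :=
    ENNReal.toReal_pos hvolQ.ne' ((measure_mono hQK).trans_lt hK.measure_lt_top).ne
  have hVK : 0 < volume.real K := ENNReal.toReal_pos hvolK.ne' hK.measure_lt_top.ne
  rw [le_suppFn_iff hp hK hvolK]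
  calc Real.exp (p * (Real.log (volume.real Q / volume.real K) / p + b)) * volume.real K
      = Real.exp (p * b) * volume.real Q := by
        rw [mul_add, mul_div_cancel₀ _ hp.ne', Real.exp_add, Real.exp_log (div_pos hVQ hVK)]
        field_simp
    _ ≤ ∫ x in Q, Real.exp (p * (x.1 * w.1 + x.2 * w.2)) :=
        setIntegral_ge_of_const_le_real hQ ((measure_mono hQK).trans_lt hK.measure_lt_top).ne
          (fun x hx => Real.exp_le_exp.2 (mul_le_mul_of_nonneg_left (hb x hx) hp.le))
          ((integrableOn_exp_pairing p hK w).mono_set hQK)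
    _ ≤ ∫ x in K, Real.exp (p * (x.1 * w.1 + x.2 * w.2)) :=
        setIntegral_mono_set (integrableOn_exp_pairing p hK w)
          (.of_forall fun _ => (Real.exp_pos _).le) hQK.eventuallyLE

end SupportFunction

lemma integrableOn_mul_exp_neg_mul_Ioi {a : ℝ} (ha : 0 < a) :
    IntegrableOn (fun r : ℝ => r * Real.exp (-(a * r))) (Ioi 0) := by
  simpa using integrableOn_rpow_mul_exp_neg_mul_rpow (s := 1) (p := 1) (by norm_num) one_pos ha

lemma integral_mul_exp_neg_mul_Ioi {a : ℝ} (ha : 0 < a) :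
    ∫ r in Ioi (0 : ℝ), r * Real.exp (-(a * r)) = 1 / a ^ 2 := by
  have h := Real.integral_rpow_mul_exp_neg_mul_Ioi (a := 2) two_pos ha
  norm_num at h
  rw [h, one_div]

section NearNorm

variable {p : ℝ} {K : Set (ℝ × ℝ)} {y : ℝ × ℝ}

lemma nearNorm_le_one_of_suppFn_le (hle : ∀ r, 0 < r → suppFn p K (r • y) ≤ r) :
    nearNorm p K y ≤ 1 := by
  rcases eq_or_ne y 0 with rfl | hy
  · simp [nearNorm]
  rw [nearNorm, if_neg hy]
  by_cases hint : IntegrableOn (fun r => r * Real.exp (-suppFn p K (r • y))) (Ioi 0)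
  · refine Real.rpow_le_one_of_one_le_of_nonpos ?_ (by norm_num)
    calc (1 : ℝ) = ∫ r in Ioi (0 : ℝ), r * Real.exp (-(1 * r)) := by
          rw [integral_mul_exp_neg_mul_Ioi one_pos]; norm_num
      _ ≤ ∫ r in Ioi (0 : ℝ), r * Real.exp (-suppFn p K (r • y)) :=
          setIntegral_mono_on (integrableOn_mul_exp_neg_mul_Ioi one_pos) hint measurableSet_Ioi
            fun r hr => mul_le_mul_of_nonneg_left
              (Real.exp_le_exp.2 (by linarith [hle r hr])) (le_of_lt hr)
  · -- the junk value `∫ = 0` gives `0 ^ (-1/2) = 0`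
    rw [integral_undef hint, Real.zero_rpow (by norm_num)]
    exact zero_le_one

lemma one_lt_nearNorm_of_le_suppFn (hy : y ≠ 0) {a c : ℝ} (ha : 0 < a)
    (hle : ∀ r, 0 < r → c + a * r ≤ suppFn p K (r • y)) (hc : Real.exp (-c) < a ^ 2) :
    1 < nearNorm p K y := by
  set g : ℝ → ℝ := fun r => r * Real.exp (-suppFn p K (r • y))
  have hg_nonneg : ∀ r ∈ Ioi (0 : ℝ), 0 ≤ g r := fun r hr => by
    have : (0 : ℝ) < r := hr
    positivity
  have hg_le : ∀ r ∈ Ioi (0 : ℝ), g r ≤ Real.exp (-c) * (r * Real.exp (-(a * r))) := by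
    intro r hr
    calc g r ≤ r * Real.exp (-(c + a * r)) :=
          mul_le_mul_of_nonneg_left (Real.exp_le_exp.2 (by linarith [hle r hr])) (le_of_lt hr)
      _ = _ := by rw [neg_add, Real.exp_add]; ring
  have hg_meas : Measurable g :=
    measurable_id.mul ((measurable_suppFn p K).comp (measurable_id.smul_const y)).neg.exp
  have hg_int : IntegrableOn g (Ioi 0) :=
    ((integrableOn_mul_exp_neg_mul_Ioi ha).const_mul _).mono' hg_meas.aestronglyMeasurable
      ((ae_restrict_iff' measurableSet_Ioi).2 (.of_forall fun r hr => by
        rw [Real.norm_of_nonneg (hg_nonneg r hr)]; exact hg_le r hr))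
  have hsupp : Ioi 0 ⊆ Function.support g := fun r (hr : 0 < r) =>
    (by positivity : g r ≠ 0)
  have hpos : 0 < ∫ r in Ioi (0 : ℝ), g r := by
    rw [setIntegral_pos_iff_support_of_nonneg_ae
      ((ae_restrict_iff' measurableSet_Ioi).2 (.of_forall hg_nonneg)) hg_int,
      inter_eq_right.2 hsupp, Real.volume_Ioi]
    exact ENNReal.zero_lt_top
  have hlt : ∫ r in Ioi (0 : ℝ), g r < 1 :=
    calc ∫ r in Ioi (0 : ℝ), g r
        ≤ ∫ r in Ioi (0 : ℝ), Real.exp (-c) * (r * Real.exp (-(a * r))) :=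
          setIntegral_mono_on hg_int ((integrableOn_mul_exp_neg_mul_Ioi ha).const_mul _)
            measurableSet_Ioi hg_le
      _ = Real.exp (-c) / a ^ 2 := by
          rw [integral_const_mul, integral_mul_exp_neg_mul_Ioi ha, mul_one_div]
      _ < 1 := (div_lt_one (by positivity)).2 hc
  rw [nearNorm, if_neg hy]
  exact (Real.one_lt_rpow_iff_of_pos hpos).2 (Or.inr ⟨hlt, by norm_num⟩)

end NearNorm

lemma ball_sub_subset_image_sub {E : Type*} [SeminormedAddCommGroup E] {K : Set E} {z : E}
    {ε : ℝ} (h : ball z ε ⊆ K) (a : E) : ball (z - a) ε ⊆ (fun q => q - a) '' K := fun q hq =>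
  ⟨q + a, h (by rwa [← preimage_add_right_ball] at hq), add_sub_cancel_right q a⟩

lemma exists_ball_subset_ball_pairing_ge {z y : ℝ × ℝ} (hz : 0 ≤ z.1 * y.1 + z.2 * y.2)
    {ε : ℝ} (hε : 0 ≤ ε) :
    ∃ w, ball w (ε / 4) ⊆ ball z ε ∧
      ∀ x ∈ ball w (ε / 4), ε / 4 * (|y.1| + |y.2|) ≤ x.1 * y.1 + x.2 * y.2 := by
  set v : ℝ × ℝ := ((SignType.sign y.1 : ℝ), (SignType.sign y.2 : ℝ))
  have hsign : ∀ t : ℝ, |(SignType.sign t : ℝ)| ≤ 1 := fun t => by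
    rcases lt_trichotomy t 0 with h | h | h <;> simp [h]
  refine ⟨z + (ε / 2) • v, ball_subset_ball' ?_, fun x hx => ?_⟩
  · have hv : ‖v‖ ≤ 1 := max_le (hsign _) (hsign _)
    rw [dist_eq_norm, add_sub_cancel_left, norm_smul, Real.norm_of_nonneg (by positivity)]
    nlinarith
  rw [mem_ball, Prod.dist_eq, max_lt_iff, Real.dist_eq, Real.dist_eq] at hx
  set u := x - (z + (ε / 2) • v)
  have hu1 : -(ε / 4 * |y.1|) ≤ u.1 * y.1 :=
    (abs_le.1 ((abs_mul _ _).trans_le (mul_le_mul_of_nonneg_right hx.1.le (abs_nonneg _)))).1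
  have hu2 : -(ε / 4 * |y.2|) ≤ u.2 * y.2 :=
    (abs_le.1 ((abs_mul _ _).trans_le (mul_le_mul_of_nonneg_right hx.2.le (abs_nonneg _)))).1
  have hx : x.1 * y.1 + x.2 * y.2
      = (z.1 * y.1 + z.2 * y.2) + ε / 2 * (|y.1| + |y.2|) + (u.1 * y.1 + u.2 * y.2) := by
    simp only [u, v, Prod.fst_sub, Prod.snd_sub, Prod.fst_add, Prod.snd_add, Prod.smul_fst,
      Prod.smul_snd, smul_eq_mul, ← sign_mul_self y.1, ← sign_mul_self y.2]
    ring
  linarith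

section HalfPlanes

variable {p : ℝ} {K : Set (ℝ × ℝ)}

lemma isBounded_lpPolar_inter_halfPlane (hp : 0 < p) (hK : IsCompact K) {z : ℝ × ℝ} {ε : ℝ}
    (hε : 0 < ε) (hball : ball z ε ⊆ K) :
    Bornology.IsBounded (lpPolar p K ∩ {y | 0 ≤ z.1 * y.1 + z.2 * y.2}) := by
  set c := Real.log (volume.real (ball (0 : ℝ × ℝ) (ε / 4)) / volume.real K) / p
  refine isBounded_iff_subset_closedBall 0 |>.2
    ⟨4 / ε * √(Real.exp (-c)), fun y ⟨hpolar, hz⟩ => ?_⟩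
  rw [mem_closedBall, dist_zero_right]
  by_contra! hbig
  have hy : y ≠ 0 := by
    rintro rfl
    exact hbig.not_ge (by rw [norm_zero]; positivity)
  set a := ε / 4 * (|y.1| + |y.2|)
  have hnorm : ‖y‖ ≤ |y.1| + |y.2| :=
    max_le (le_add_of_nonneg_right (abs_nonneg _)) (le_add_of_nonneg_left (abs_nonneg _))
  have hsqrt : √(Real.exp (-c)) < a :=
    calc √(Real.exp (-c)) = ε / 4 * (4 / ε * √(Real.exp (-c))) := by field_simp
      _ < ε / 4 * ‖y‖ := by gcongr
      _ ≤ a := mul_le_mul_of_nonneg_left hnorm (by positivity)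
  have ha : 0 < a := (Real.sqrt_nonneg _).trans_lt hsqrt
  obtain ⟨w, hwz, hw⟩ := exists_ball_subset_ball_pairing_ge hz hε.le
  have hle : ∀ r, 0 < r → c + a * r ≤ suppFn p K (r • y) := fun r hr => by
    have := le_suppFn_of_le_on hp hK (hwz.trans hball) measurableSet_ball
      (measure_ball_pos _ _ (by positivity)) (w := r • y) (b := a * r) fun x hx => by
        calc a * r ≤ r * (x.1 * y.1 + x.2 * y.2) := by
              rw [mul_comm]; exact mul_le_mul_of_nonneg_left (hw x hx) hr.le
          _ = x.1 * (r • y).1 + x.2 * (r • y).2 := by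
              simp only [Prod.smul_fst, Prod.smul_snd, smul_eq_mul]; ring
    rwa [measureReal_def, Measure.addHaar_ball_center] at this
  exact (one_lt_nearNorm_of_le_suppFn hy ha hle ((Real.sqrt_lt' ha).1 hsqrt)).not_ge hpolar

lemma polar_subset_lpPolar (hp : 0 < p) (hK : IsCompact K) (hvol : 0 < volume K) :
    {y : ℝ × ℝ | ∀ x ∈ K, x.1 * y.1 + x.2 * y.2 ≤ 1} ⊆ lpPolar p K := fun y hy =>
  nearNorm_le_one_of_suppFn_le fun r hr => suppFn_le_of_forall_le hp hK hvol fun x hx =>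
    calc x.1 * (r • y).1 + x.2 * (r • y).2 = r * (x.1 * y.1 + x.2 * y.2) := by
          simp only [Prod.smul_fst, Prod.smul_snd, smul_eq_mul]; ring
      _ ≤ r := mul_le_of_le_one_right hr.le (hy x hx)

lemma volume_lpPolar_inter_eq_top (hp : 0 < p) (hK : IsCompact K) (hvol : 0 < volume K)
    {S : Set ℝ} (hS : volume S = ⊤) (hSK : ∀ t ∈ S, ∀ x ∈ K, x.1 * t ≤ 0) :
    volume (lpPolar p K ∩ {y | y.1 ∈ S}) = ⊤ := by
  obtain ⟨R, hR, hKR⟩ := hK.isBounded.exists_pos_norm_le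
  have hstrip : S ×ˢ Ioo (-R⁻¹) R⁻¹ ⊆ lpPolar p K ∩ {y | y.1 ∈ S} :=
    fun y ⟨hy1, hy2⟩ => ⟨polar_subset_lpPolar hp hK hvol fun x hx => by
      have h2 : x.2 * y.2 ≤ 1 :=
        calc x.2 * y.2 ≤ ‖x.2‖ * ‖y.2‖ := (le_abs_self _).trans (abs_mul _ _).le
          _ ≤ R * R⁻¹ := mul_le_mul ((norm_snd_le x).trans (hKR x hx))
              (abs_lt.2 hy2).le (norm_nonneg _) hR.le
          _ = 1 := mul_inv_cancel₀ hR.ne'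
      linarith [hSK _ hy1 x hx], hy1⟩
  refine top_le_iff.1 (le_of_eq_of_le ?_ (measure_mono hstrip))
  rw [Measure.volume_eq_prod, Measure.prod_prod, hS, Real.volume_Ioo, ENNReal.top_mul]
  simp [hR]

end HalfPlanes

theorem lpPolar_halfspace_finiteness_general (p : ℝ) (hp : 0 < p)
    (K : Set (ℝ × ℝ)) (hKcomp : IsCompact K)
    (h0 : (0 : ℝ × ℝ) ∈ interior K)
    (α β : ℝ)
    (hα : IsLeast {x : ℝ | ∃ y : ℝ, ((x : ℝ), y) ∈ K} α)
    (hβ : IsGreatest {x : ℝ | ∃ y : ℝ, ((x : ℝ), y) ∈ K} β) :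
    volume (lpPolar p ((fun q => q - ((α : ℝ), (0 : ℝ))) '' K) ∩ {q : ℝ × ℝ | 0 < q.1}) < ⊤ ∧
    volume (lpPolar p ((fun q => q - ((β : ℝ), (0 : ℝ))) '' K) ∩ {q : ℝ × ℝ | q.1 < 0}) < ⊤ ∧
    volume (lpPolar p ((fun q => q - ((α : ℝ), (0 : ℝ))) '' K) ∩ {q : ℝ × ℝ | q.1 < 0}) = ⊤ ∧
    volume (lpPolar p ((fun q => q - ((β : ℝ), (0 : ℝ))) '' K) ∩ {q : ℝ × ℝ | 0 < q.1}) = ⊤ := by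
  obtain ⟨ε, hε, hεK⟩ := isOpen_iff.1 isOpen_interior 0 h0
  have hα0 : α ≤ 0 := hα.2 ⟨0, interior_subset h0⟩
  have hβ0 : 0 ≤ β := hβ.2 ⟨0, interior_subset h0⟩
  have hball (c : ℝ) := ball_sub_subset_image_sub (hεK.trans interior_subset) ((c, 0) : ℝ × ℝ)
  have hcomp (c : ℝ) : IsCompact ((fun q => q - (c, 0)) '' K) := hKcomp.image (by fun_prop)
  have hvol (c : ℝ) : 0 < volume ((fun q => q - (c, 0)) '' K) :=
    (measure_ball_pos _ _ hε).trans_le (measure_mono (hball c))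
  have hbdd (c : ℝ) :=
    (isBounded_lpPolar_inter_halfPlane hp (hcomp c) hε (hball c)).measure_lt_top (μ := volume)
  refine ⟨?_, ?_, ?_, ?_⟩
  · refine (measure_mono (inter_subset_inter_right _ fun y hy => ?_)).trans_lt (hbdd α)
    simp only [mem_ofPred_eq, Prod.fst_sub, Prod.snd_sub, Prod.fst_zero, Prod.snd_zero] at hy ⊢
    nlinarith
  · refine (measure_mono (inter_subset_inter_right _ fun y hy => ?_)).trans_lt (hbdd β)
    simp only [mem_ofPred_eq, Prod.fst_sub, Prod.snd_sub, Prod.fst_zero, Prod.snd_zero] at hy ⊢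
    nlinarith
  · refine volume_lpPolar_inter_eq_top hp (hcomp α) (hvol α) Real.volume_Iio ?_
    rintro t (ht : t < 0) _ ⟨k, hk, rfl⟩
    exact mul_nonpos_of_nonneg_of_nonpos (by simpa using hα.2 ⟨k.2, hk⟩) ht.le
  · refine volume_lpPolar_inter_eq_top hp (hcomp β) (hvol β) Real.volume_Ioi ?_
    rintro t (ht : 0 < t) _ ⟨k, hk, rfl⟩
    exact mul_nonpos_of_nonpos_of_nonneg (by simpa using hβ.2 ⟨k.2, hk⟩) ht.le

/-- Lemma 5.10: translating a planar convex body so that the origin sits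
on its leftmost (resp. rightmost) vertical tangent line makes the right (resp. left) part of
the `L^p`-polar have finite area, and the other part infinite area. -/
theorem lpPolar_halfspace_finiteness (p : ℝ) (hp : 0 < p)
    (K : Set (ℝ × ℝ)) (hKcomp : IsCompact K) (hKconv : Convex ℝ K)
    (hKint : (interior K).Nonempty) (h0 : (0 : ℝ × ℝ) ∈ interior K)
    (α β : ℝ)
    (hα : IsLeast {x : ℝ | ∃ y : ℝ, ((x : ℝ), y) ∈ K} α)
    (hβ : IsGreatest {x : ℝ | ∃ y : ℝ, ((x : ℝ), y) ∈ K} β) :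
    volume (lpPolar p ((fun q => q - ((α : ℝ), (0 : ℝ))) '' K) ∩ {q : ℝ × ℝ | 0 < q.1}) < ⊤ ∧
    volume (lpPolar p ((fun q => q - ((β : ℝ), (0 : ℝ))) '' K) ∩ {q : ℝ × ℝ | q.1 < 0}) < ⊤ ∧
    volume (lpPolar p ((fun q => q - ((α : ℝ), (0 : ℝ))) '' K) ∩ {q : ℝ × ℝ | q.1 < 0}) = ⊤ ∧
    volume (lpPolar p ((fun q => q - ((β : ℝ), (0 : ℝ))) '' K) ∩ {q : ℝ × ℝ | 0 < q.1}) = ⊤ :=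
  lpPolar_halfspace_finiteness_general p hp K hKcomp h0 α β hα hβ
end
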